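/- For all integers d ≥ 2 and B ≥ 2, one has A₃(d,B) > 0, A₂(d,B) ≥ 0, and (A₁(d,B) + (d − 1)·√(A₂(d,B))) / A₃(d,B) ≤ 2/d². (The left-hand side is the spectral radius of the O₁ interaction block of the 24-component statistical model.) -/
import Mathlib

/-- The polynomial `A₁(d,B)` from the spectral radius of the `O₁` interaction block. -/
def A₁ (d B : ℝ) : ℝ :=
  B ^ 6 * (d ^ 4 + d ^ 3) + B ^ 4 * (2 * d ^ 4 - 5 * d ^ 3 - 26 * d ^ 2 + d) +
    B ^ 2 * (-8 * d ^ 3 + 23 * d ^ 2 + 65 * d + 18) - 18 * d - 54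

/-- The polynomial `A₂(d,B)` appearing under the square root in the spectral radius
of the `O₁` interaction block. -/
def A₂ (d B : ℝ) : ℝ :=
  B ^ 12 * d ^ 6 + B ^ 10 * (4 * d ^ 6 + 6 * d ^ 5 + 2 * d ^ 4) +
    B ^ 8 * (4 * d ^ 6 - 36 * d ^ 5 - 213 * d ^ 4 - 158 * d ^ 3 + d ^ 2) +
    B ^ 6 * (-24 * d ^ 5 + 156 * d ^ 4 + 1078 * d ^ 3 + 1282 * d ^ 2 + 36 * d) +
    B ^ 4 * (64 * d ^ 4 - 488 * d ^ 3 - 2075 * d ^ 2 - 2736 * d + 324) +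
    B ^ 2 * (288 * d ^ 2 + 1836 * d + 648) + 324

/-- The polynomial `A₃(d,B)`, the common denominator of the spectral radius of the
`O₁` interaction block. -/
def A₃ (d B : ℝ) : ℝ :=
  2 * (B ^ 6 * d ^ 6 - 6 * B ^ 4 * d ^ 4 + 11 * B ^ 2 * d ^ 2 - 6)

set_option maxHeartbeats 2000000 in
private lemma aux_le_of_sq_le_sq {t r : ℝ} (ht : 0 ≤ t) (hr : 0 ≤ r) (h : t ^ 2 ≤ r ^ 2) :
    t ≤ r := by nlinarith

set_option maxHeartbeats 4000000 in
set_option maxRecDepth 100000 in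
/-- For all integers `d ≥ 2` and `B ≥ 2`: `A₃(d,B) > 0`,
`A₂(d,B) ≥ 0`, and `(A₁(d,B) + (d − 1)·√(A₂(d,B))) / A₃(d,B) ≤ 2/d²`.
(The left-hand side is the spectral radius of the `O₁` interaction block.) -/
theorem O₁_block_spectral_radius_le (d B : ℤ) (hd : 2 ≤ d) (hB : 2 ≤ B) :
    0 < A₃ (d : ℝ) (B : ℝ) ∧ 0 ≤ A₂ (d : ℝ) (B : ℝ) ∧
    (A₁ (d : ℝ) (B : ℝ) + ((d : ℝ) - 1) * Real.sqrt (A₂ (d : ℝ) (B : ℝ))) /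
        A₃ (d : ℝ) (B : ℝ) ≤ 2 / (d : ℝ) ^ 2 := by
  have hx : (2:ℝ) ≤ (d:ℝ) := by exact_mod_cast hd
  have hy : (2:ℝ) ≤ (B:ℝ) := by exact_mod_cast hB
  obtain ⟨a, ha, hxa⟩ : ∃ a : ℝ, 0 ≤ a ∧ (d:ℝ) = a + 2 := ⟨(d:ℝ) - 2, by linarith, by ring⟩
  obtain ⟨b, hb, hyb⟩ : ∃ b : ℝ, 0 ≤ b ∧ (B:ℝ) = b + 2 := ⟨(B:ℝ) - 2, by linarith, by ring⟩
  rw [hxa, hyb]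
  have hA3 : 0 < A₃ (a + 2) (b + 2) := by
    have e : A₃ (a + 2) (b + 2) = 5460 + 18784*b + 26200*b^2 + 18944*b^3 + 7488*b^4 + 1536*b^5 + 128*b^6 + 18784*a + 61792*a*b + 83032*a*b^2 + 58368*a*b^3 + 22656*a*b^4 + 4608*a*b^5 + 384*a*b^6 + 26200*a^2 + 83032*a^2*b + 108310*a^2*b^2 + 74496*a^2*b^3 + 28512*a^2*b^4 + 5760*a^2*b^5 + 480*a^2*b^6 + 18944*a^3 + 58368*a^3*b + 74496*a^3*b^2 + 50432*a^3*b^3 + 19104*a^3*b^4 + 3840*a^3*b^5 + 320*a^3*b^6 + 7488*a^4 + 22656*a^4*b + 28512*a^4*b^2 + 19104*a^4*b^3 + 7188*a^4*b^4 + 1440*a^4*b^5 + 120*a^4*b^6 + 1536*a^5 + 4608*a^5*b + 5760*a^5*b^2 + 3840*a^5*b^3 + 1440*a^5*b^4 + 288*a^5*b^5 + 24*a^5*b^6 + 128*a^6 + 384*a^6*b + 480*a^6*b^2 + 320*a^6*b^3 + 120*a^6*b^4 + 24*a^6*b^5 + 2*a^6*b^6 := by unfold A₃; ring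
    rw [e]; positivity
  have hA2 : 0 ≤ A₂ (a + 2) (b + 2) := by
    have e : A₂ (a + 2) (b + 2) = 85572 + 818304*b + 3230368*b^2 + 6968768*b^3 + 9246392*b^4 + 8052736*b^5 + 4789888*b^6 + 1993792*b^7 + 587716*b^8 + 122240*b^9 + 17376*b^10 + 1536*b^11 + 64*b^12 + 489456*a + 3958320*a*b + 13428940*a*b^2 + 25658528*a*b^3 + 31100596*a*b^4 + 25450864*a*b^5 + 14571764*a*b^6 + 5952448*a*b^7 + 1745980*a*b^8 + 364160*a*b^9 + 52000*a*b^10 + 4608*a*b^11 + 192*a*b^12 + 1022544*a^2 + 7074720*a^2*b + 21278392*a^2*b^2 + 37095016*a^2*b^3 + 42046013*a^2*b^4 + 32869768*a^2*b^5 + 18308246*a^2*b^6 + 7383376*a^2*b^7 + 2160661*a^2*b^8 + 452160*a^2*b^9 + 64848*a^2*b^10 + 5760*a^2*b^11 + 240*a^2*b^12 + 979200*a^3 + 6056832*a^3*b + 16693472*a^3*b^2 + 27233408*a^3*b^3 + 29417984*a^3*b^4 + 22269320*a^3*b^5 + 12175542*a^3*b^6 + 4872608*a^3*b^7 + 1425818*a^3*b^8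 + 299520*a^3*b^9 + 43136*a^3*b^10 + 3840*a^3*b^11 + 160*a^3*b^12 + 465408*a^4 + 2665728*a^4*b + 6918720*a^4*b^2 + 10787456*a^4*b^3 + 11284144*a^4*b^4 + 8367696*a^4*b^5 + 4525500*a^4*b^6 + 1805232*a^4*b^7 + 529227*a^4*b^8 + 111640*a^4*b^9 + 16142*a^4*b^10 + 1440*a^4*b^11 + 60*a^4*b^12 + 105984*a^5 + 579072*a^5*b + 1448832*a^5*b^2 + 2198784*a^5*b^3 + 2258400*a^5*b^4 + 1657056*a^5*b^5 + 892392*a^5*b^6 + 356160*a^5*b^7 + 104772*a^5*b^8 + 22200*a^5*b^9 + 3222*a^5*b^10 + 288*a^5*b^11 + 12*a^5*b^12 + 9216*a^6 + 49152*a^6*b + 120832*a^6*b^2 + 181248*a^6*b^3 + 184960*a^6*b^4 + 135424*a^6*b^5 + 73024*a^6*b^6 + 29248*a^6*b^7 + 8644*a^6*b^8 + 1840*a^6*b^9 + 268*a^6*b^10 + 24*a^6*b^11 + 1*a^6*b^12 := by unfold A₂; ring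
    rw [e]; positivity
  refine ⟨hA3, hA2, ?_⟩
  set Rp : ℝ := 9360 + 30400*b + 39216*b^2 + 26048*b^3 + 9656*b^4 + 1920*b^5 + 160*b^6 + 30176*a + 94320*a*b + 119900*a*b^2 + 79904*a*b^3 + 29828*a*b^4 + 5952*a*b^5 + 496*a*b^6 + 39410*a^2 + 120560*a^2*b + 152412*a^2*b^2 + 102096*a^2*b^3 + 38362*a^2*b^4 + 7680*a^2*b^5 + 640*a^2*b^6 + 26782*a^3 + 81404*a^3*b + 103151*a^3*b^2 + 69560*a^3*b^3 + 26295*a^3*b^4 + 5280*a^3*b^5 + 440*a^3*b^6 + 10020*a^4 + 30692*a^4*b + 39225*a^4*b^2 + 26656*a^4*b^3 + 10132*a^4*b^4 + 2040*a^4*b^5 + 170*a^4*b^6 + 1968*a^5 + 6144*a^5*b + 7952*a^5*b^2 + 5448*a^5*b^3 + 2081*a^5*b^4 + 420*a^5*b^5 + 35*a^5*b^6 + 160*a^6 + 512*a^6*b + 672*a^6*b^2 + 464*a^6*b^3 + 178*a^6*b^4 + 36*a^6*b^5 + 3*a^6*b^6 with hRp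
  have hR : 0 ≤ Rp := by rw [hRp]; positivity
  have hQ : 0 ≤ Rp ^ 2 - (a + 1) ^ 2 * (a + 2) ^ 4 * A₂ (a + 2) (b + 2) := by
    have e : Rp ^ 2 - (a + 1) ^ 2 * (a + 2) ^ 4 * A₂ (a + 2) (b + 2) = 86240448 + 555995136*b + 1606597632*b^2 + 2760451072*b^3 + 3154431104*b^4 + 2537180160*b^5 + 1478930688*b^6 + 631455744*b^7 + 196408320*b^8 + 43458560*b^9 + 6498304*b^10 + 589824*b^11 + 24576*b^12 + 551586816*a + 3484666624*a*b + 9924341440*a*b^2 + 16898940416*a*b^3 + 19227615168*a*b^4 + 15453099520*a*b^5 + 9020968064*a*b^6 + 3861766144*a*b^7 + 1204665856*a*b^8 + 267243520*a*b^9 + 40035328*a*b^10 + 3637248*a*b^11 + 151552*a*b^12 + 1591760800*a^2 + 9893780224*a^2*b + 27870808256*a^2*b^2 + 47166636288*a^2*b^3 + 53545812000*a^2*b^4 + 43058109440*a^2*b^5 + 25191918848*a^2*b^6 + 10816458752*a^2*b^7 + 3384353024*a^2*b^8 + 752721920*a^2*b^9 + 112969728*a^2*b^10 + 10272768*a^2*b^11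 + 428032*a^2*b^12 + 2740287584*a^3 + 16829200576*a^3*b + 47062446384*a^3*b^2 + 79383122304*a^3*b^3 + 90100595248*a^3*b^4 + 72587126784*a^3*b^5 + 42594008576*a^3*b^6 + 18348718080*a^3*b^7 + 5758972800*a^3*b^8 + 1284136960*a^3*b^9 + 193067008*a^3*b^10 + 17571840*a^3*b^11 + 732160*a^3*b^12 + 3134029280*a^4 + 19103417728*a^4*b + 53231598688*a^4*b^2 + 89749963136*a^4*b^3 + 102048830128*a^4*b^4 + 82467484864*a^4*b^5 + 48567768848*a^4*b^6 + 20997446656*a^4*b^7 + 6611263936*a^4*b^8 + 1477893120*a^4*b^9 + 222579456*a^4*b^10 + 20275200*a^4*b^11 + 844800*a^4*b^12 + 2508299296*a^5 + 15248273792*a^5*b + 42501414368*a^5*b^2 + 71832394432*a^5*b^3 + 81979799192*a^5*b^4 + 66532389728*a^5*b^5 + 39349811272*a^5*b^6 + 17077801472*a^5*b^7 + 5394468128*a^5*b^8 + 1208870400*a^5*b^9 + 182365056*a^5*b^10 + 16625664*a^5*b^11 + 692736*a^5*b^12 + 1440412960*a^6 + 8778299552*a^6*b + 24572240808*a^6*b^2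 + 41748565184*a^6*b^3 + 47911473880*a^6*b^4 + 39091685472*a^6*b^5 + 23231276040*a^6*b^6 + 10123303680*a^6*b^7 + 3208090032*a^6*b^8 + 720652800*a^6*b^9 + 108888192*a^6*b^10 + 9934848*a^6*b^11 + 413952*a^6*b^12 + 598055200*a^7 + 3674210400*a^7*b + 10370812504*a^7*b^2 + 17761603616*a^7*b^3 + 20532064484*a^7*b^4 + 16858133008*a^7*b^5 + 10071014700*a^7*b^6 + 4407045760*a^7*b^7 + 1401124072*a^7*b^8 + 315482880*a^7*b^9 + 47741376*a^7*b^10 + 4359168*a^7*b^11 + 181632*a^7*b^12 + 178244224*a^8 + 1110498048*a^8*b + 3173551424*a^8*b^2 + 5493035328*a^8*b^3 + 6405829096*a^8*b^4 + 5297007392*a^8*b^5 + 3182144408*a^8*b^6 + 1398487040*a^8*b^7 + 446043200*a^8*b^8 + 100661280*a^8*b^9 + 15255144*a^8*b^10 + 1393920*a^8*b^11 + 58080*a^8*b^12 + 37219328*a^9 + 236622080*a^9*b + 687336000*a^9*b^2 + 1205156864*a^9*b^3 + 1419611936*a^9*b^4 + 1182954672*a^9*b^5 + 714795364*a^9*b^6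 + 315497088*a^9*b^7 + 100942728*a^9*b^8 + 22830160*a^9*b^9 + 3464708*a^9*b^10 + 316800*a^9*b^11 + 13200*a^9*b^12 + 5176320*a^10 + 33793024*a^10*b + 100134144*a^10*b^2 + 178195968*a^10*b^3 + 212224320*a^10*b^4 + 178281024*a^10*b^5 + 108363824*a^10*b^6 + 48034560*a^10*b^7 + 15415344*a^10*b^8 + 3493760*a^10*b^9 + 530912*a^10*b^10 + 48576*a^10*b^11 + 2024*a^10*b^12 + 431616*a^11 + 2910720*a^11*b + 8823936*a^11*b^2 + 15958784*a^11*b^3 + 19226400*a^11*b^4 + 16284576*a^11*b^5 + 9956344*a^11*b^6 + 4431744*a^11*b^7 + 1426392*a^11*b^8 + 323920*a^11*b^9 + 49284*a^11*b^10 + 4512*a^11*b^11 + 188*a^11*b^12 + 16384*a^12 + 114688*a^12*b + 356352*a^12*b^2 + 655360*a^12*b^3 + 798720*a^12*b^4 + 681984*a^12*b^5 + 419328*a^12*b^6 + 187392*a^12*b^7 + 60480*a^12*b^8 + 13760*a^12*b^9 + 2096*a^12*b^10 + 192*a^12*b^11 + 8*a^12*b^12 := by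
      rw [hRp]; unfold A₂; ring
    rw [e]; positivity
  set s : ℝ := Real.sqrt (A₂ (a + 2) (b + 2)) with hs
  have hs0 : 0 ≤ s := Real.sqrt_nonneg _
  have hs2 : s ^ 2 = A₂ (a + 2) (b + 2) := Real.sq_sqrt hA2
  have hT0 : 0 ≤ (a + 1) * s * (a + 2) ^ 2 := by positivity
  have hTsq : ((a + 1) * s * (a + 2) ^ 2) ^ 2 ≤ Rp ^ 2 := by
    have e : ((a + 1) * s * (a + 2) ^ 2) ^ 2 = (a + 1) ^ 2 * (a + 2) ^ 4 * s ^ 2 := by ring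
    rw [e, hs2]; linarith
  have key : (a + 1) * s * (a + 2) ^ 2 ≤ Rp := aux_le_of_sq_le_sq hT0 hR hTsq
  have hid : A₁ (a + 2) (b + 2) * (a + 2) ^ 2 + Rp = 2 * A₃ (a + 2) (b + 2) := by
    rw [hRp]; unfold A₁ A₃; ring
  rw [div_le_div_iff₀ hA3 (by positivity : (0:ℝ) < (a + 2) ^ 2)]
  nlinarith [key, hid]
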